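/- Let α, β, γ, δ, η > 0, ρₑ > 0, vₑ ∈ ℝ³, and let A₀(ξ) be the 8×8 symbol of the linearized Cattaneo-Christov-Jordan system at an equilibrium state. For every ξ ∈ ℝ³ \ {0}, any nonzero vector Z = (0, z, 0, 0, 0, 0) with z ∈ ℝ³, z ≠ 0, z·ξ = 0 (placed in components 2–4 of ℝ⁸) satisfies D Z = 0 and A₀(ξ) Z = (vₑ·ξ) Z. Hence the Kawashima–Shizuta genuinely coupling condition fails at every equilibrium state. -/

import Mathlib

/-! Transverse velocity perturbations `(0, z, 0, 0)` with `z ⊥ ξ` are invisible to the relaxation,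
which only damps the heat flux, and decouple from density and temperature in `A₀(ξ)`, which only
sees them through `ξ · z`; such a mode is merely transported, with eigenvalue `vₑ · ξ`. -/

open Finset Matrix

/-- The 8×8 symbol of the linearized Cattaneo-Christov-Jordan system at equilibrium. -/
def A0sym (α β γ δ η ρe : ℝ) (ve ξ : Fin 3 → ℝ) : Matrix (Fin 8) (Fin 8) ℝ :=
  let w : ℝ := ∑ i, ve i * ξ i
  !![w,        ρe * ξ 0, ρe * ξ 1, ρe * ξ 2, 0,        0, 0, 0;
     α * ξ 0,  w,        0,        0,        η * ξ 0,  0, 0, 0;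
     α * ξ 1,  0,        w,        0,        η * ξ 1,  0, 0, 0;
     α * ξ 2,  0,        0,        w,        η * ξ 2,  0, 0, 0;
     0,        β * ξ 0,  β * ξ 1,  β * ξ 2,  w,        γ * ξ 0, γ * ξ 1, γ * ξ 2;
     0,        0,        0,        0,        δ * ξ 0,  w, 0, 0;
     0,        0,        0,        0,        δ * ξ 1,  0, w, 0;
     0,        0,        0,        0,        δ * ξ 2,  0, 0, w]

/-- The relaxation Jacobian `D`. -/
noncomputable def Dmat (τ : ℝ) : Matrix (Fin 8) (Fin 8) ℝ :=
  Matrix.diagonal fun i => if 5 ≤ (i : ℕ) then 1 / τ else 0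

def transverseMode (z : Fin 3 → ℝ) : Fin 8 → ℝ := ![0, z 0, z 1, z 2, 0, 0, 0, 0]

lemma transverseMode_ne_zero {z : Fin 3 → ℝ} (hz : z ≠ 0) : transverseMode z ≠ 0 := by
  contrapose! hz
  funext i
  fin_cases i
  exacts [congrFun hz 1, congrFun hz 2, congrFun hz 3]

lemma Dmat_mulVec_eq_zero (τ : ℝ) {Z : Fin 8 → ℝ} (hZ : ∀ i : Fin 8, 5 ≤ (i : ℕ) → Z i = 0) :
    Dmat τ *ᵥ Z = 0 := by
  funext i
  by_cases hi : 5 ≤ (i : ℕ) <;> simp [Dmat, mulVec_diagonal, hi, hZ]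

lemma Dmat_mulVec_transverseMode (τ : ℝ) (z : Fin 3 → ℝ) : Dmat τ *ᵥ transverseMode z = 0 :=
  Dmat_mulVec_eq_zero τ fun i hi => by fin_cases i <;> first | rfl | simp at hi

lemma A0sym_mulVec_transverseMode (α β γ δ η ρe : ℝ) (ve ξ z : Fin 3 → ℝ) :
    A0sym α β γ δ η ρe ve ξ *ᵥ transverseMode z =
      (∑ i, ve i * ξ i) • transverseMode z + (ξ ⬝ᵥ z) • ![ρe, 0, 0, 0, β, 0, 0, 0] := by
  funext i
  fin_cases i <;>
    simp [A0sym, transverseMode, mulVec, dotProduct, Fin.sum_univ_succ] <;> ring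

theorem stmt_11_general (α β γ δ η ρe τ : ℝ) (ve : Fin 3 → ℝ) :
    (∀ ξ : Fin 3 → ℝ, ξ ≠ 0 → ∀ z : Fin 3 → ℝ, z ≠ 0 → (∑ i, ξ i * z i) = 0 →
      let Z : Fin 8 → ℝ := ![0, z 0, z 1, z 2, 0, 0, 0, 0]
      Z ≠ 0 ∧ (Dmat τ).mulVec Z = 0 ∧
        (A0sym α β γ δ η ρe ve ξ).mulVec Z = (∑ i, ve i * ξ i) • Z) ∧
    -- hence the Kawashima–Shizuta genuinely coupling condition fails:
    ∀ ξ : Fin 3 → ℝ, ξ ≠ 0 → ∃ Z : Fin 8 → ℝ, Z ≠ 0 ∧ (Dmat τ).mulVec Z = 0 ∧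
      ∃ μ : ℝ, (A0sym α β γ δ η ρe ve ξ).mulVec Z = μ • Z := by
  have eigen (ξ z : Fin 3 → ℝ) (h : ξ ⬝ᵥ z = 0) :
      A0sym α β γ δ η ρe ve ξ *ᵥ transverseMode z = (∑ i, ve i * ξ i) • transverseMode z := by
    simp [A0sym_mulVec_transverseMode, h]
  refine ⟨fun ξ _ z hz h =>
    ⟨transverseMode_ne_zero hz, Dmat_mulVec_transverseMode τ z, eigen ξ z h⟩, fun ξ _ => ?_⟩
  obtain ⟨z, hz, h⟩ := exists_ne_zero_dotProduct_eq_zero ξ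
  exact ⟨transverseMode z, transverseMode_ne_zero hz, Dmat_mulVec_transverseMode τ z, _,
    eigen ξ z (by rwa [dotProduct_comm])⟩

theorem stmt_11 (α β γ δ η ρe τ : ℝ) (hα : 0 < α) (hβ : 0 < β) (hγ : 0 < γ)
    (hδ : 0 < δ) (hη : 0 < η) (hρ : 0 < ρe) (hτ : 0 < τ) (ve : Fin 3 → ℝ) :
    (∀ ξ : Fin 3 → ℝ, ξ ≠ 0 → ∀ z : Fin 3 → ℝ, z ≠ 0 → (∑ i, ξ i * z i) = 0 →
      let Z : Fin 8 → ℝ := ![0, z 0, z 1, z 2, 0, 0, 0, 0]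
      Z ≠ 0 ∧ (Dmat τ).mulVec Z = 0 ∧
        (A0sym α β γ δ η ρe ve ξ).mulVec Z = (∑ i, ve i * ξ i) • Z) ∧
    -- hence the Kawashima–Shizuta genuinely coupling condition fails:
    ∀ ξ : Fin 3 → ℝ, ξ ≠ 0 → ∃ Z : Fin 8 → ℝ, Z ≠ 0 ∧ (Dmat τ).mulVec Z = 0 ∧
      ∃ μ : ℝ, (A0sym α β γ δ η ρe ve ξ).mulVec Z = μ • Z :=
  stmt_11_general α β γ δ η ρe τ ve
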